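/- Under Assumption 2(i), the MM subspace iterates satisfy, for every n ≥ 1, the identity Θ_n(h_{n+1}, h_n) = F_n(h_n) − (1/2)(h_{n+1} − h_n)ᵀ A_n(h_n) (h_{n+1} − h_n). -/

import Mathlib

open Matrix Filter Topology

noncomputable section

/-- Identification of `EuclideanSpace ℝ (Fin N)` with plain tuples `Fin N → ℝ`. -/
def toEuc {N : ℕ} (v : Fin N → ℝ) : EuclideanSpace ℝ (Fin N) :=
  (WithLp.equiv 2 (Fin N → ℝ)).symm v

def ofEuc {N : ℕ} (v : EuclideanSpace ℝ (Fin N)) : Fin N → ℝ :=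
  WithLp.equiv 2 (Fin N → ℝ) v

/-- The quadratic form `vᵀ M v`. -/
def qf {N : ℕ} (M : Matrix (Fin N) (Fin N) ℝ)
    (v : EuclideanSpace ℝ (Fin N)) : ℝ :=
  ofEuc v ⬝ᵥ M.mulVec (ofEuc v)

/-- Matrix-vector product `M v`, viewed in `EuclideanSpace`. -/
def mulE {N : ℕ} (M : Matrix (Fin N) (Fin N) ℝ)
    (v : EuclideanSpace ℝ (Fin N)) : EuclideanSpace ℝ (Fin N) :=
  toEuc (M.mulVec (ofEuc v))

/-- The range of the matrix `D`, i.e. `{D u : u ∈ ℝ^M}`, as a subset of `EuclideanSpace`. -/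
def rangeD {N M : ℕ} (D : Matrix (Fin N) (Fin M) ℝ) : Set (EuclideanSpace ℝ (Fin N)) :=
  {x | ∃ u : Fin M → ℝ, x = toEuc (D.mulVec u)}

open scoped Classical in
/-- The Moore–Penrose pseudo-inverse of a real matrix, defined via its characterizing
(Penrose) equations; it exists and is unique for every real matrix. -/
def pinv {m n : ℕ} (A : Matrix (Fin m) (Fin n) ℝ) : Matrix (Fin n) (Fin m) ℝ :=
  if h : ∃ B : Matrix (Fin n) (Fin m) ℝ,
      A * B * A = A ∧ B * A * B = B ∧ (A * B)ᵀ = A * B ∧ (B * A)ᵀ = B * A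
  then h.choose else 0

end


lemma quad_key {a k : ℝ} (ha : 0 ≤ a) (h : ∀ s : ℝ, 0 ≤ a * s^2 + k * s) : k = 0 := by
  rcases eq_or_lt_of_le ha with h0 | hpos
  · have := h (-k)
    nlinarith [this, sq_nonneg k]
  · have hs := h (-(k / (2 * a)))
    have ha' : a ≠ 0 := ne_of_gt hpos
    have heq : a * (-(k / (2 * a)))^2 + k * (-(k / (2 * a))) = -(k^2 / (4 * a)) := by
      field_simp; ring
    rw [heq] at hs
    have h1 : 0 ≤ k^2 / (4 * a) := by positivity
    have h2 : k^2 / (4 * a) = 0 := le_antisymm (by linarith) h1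
    have hk2 : k^2 = 0 := by
      rcases div_eq_zero_iff.mp h2 with h | h
      · exact h
      · exact absurd h (by positivity)
    exact pow_eq_zero_iff two_ne_zero |>.mp hk2

lemma toEuc_lin {N : ℕ} (x y : Fin N → ℝ) (t : ℝ) :
    toEuc x + t • toEuc y = toEuc (x + t • y) := rfl

lemma ofEuc_add {N : ℕ} (x y : EuclideanSpace ℝ (Fin N)) :
    ofEuc (x + y) = ofEuc x + ofEuc y := rfl

lemma ofEuc_smul {N : ℕ} (t : ℝ) (x : EuclideanSpace ℝ (Fin N)) :
    ofEuc (t • x) = t • ofEuc x := rfl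

lemma ofEuc_sub {N : ℕ} (x y : EuclideanSpace ℝ (Fin N)) :
    ofEuc (x - y) = ofEuc x - ofEuc y := rfl

lemma qf_smul {N : ℕ} (M : Matrix (Fin N) (Fin N) ℝ) (t : ℝ) (v : EuclideanSpace ℝ (Fin N)) :
    qf M (t • v) = t^2 * qf M v := by
  simp [qf, ofEuc_smul, Matrix.mulVec_smul, smul_dotProduct, dotProduct_smul,
    smul_eq_mul]
  ring

theorem mm_surrogate_value_identity
    {N : ℕ} (hN : 0 < N)
    (R : Matrix (Fin N) (Fin N) ℝ) (hRpd : R.PosDef)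
    (r : EuclideanSpace ℝ (Fin N))
    (Ψ : EuclideanSpace ℝ (Fin N) → ℝ)
    (hΨbdd : BddBelow (Set.range Ψ))
    (hΨconv : ConvexOn ℝ Set.univ Ψ)
    (hΨC2 : ContDiff ℝ 2 Ψ)
    (gradΨ : EuclideanSpace ℝ (Fin N) → EuclideanSpace ℝ (Fin N))
    (hgradΨ : ∀ x, HasGradientAt Ψ (gradΨ x) x)
    (hessΨ : EuclideanSpace ℝ (Fin N) → Matrix (Fin N) (Fin N) ℝ)
    (hhessΨ : ∀ x, HasFDerivAt gradΨ
      (LinearMap.toContinuousLinearMap (Matrix.toEuclideanLin (hessΨ x))) x)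
    (F : EuclideanSpace ℝ (Fin N) → ℝ)
    (hF : ∀ x, F x = (1/2) * qf R x - ofEuc r ⬝ᵥ ofEuc x + Ψ x)
    (Rn : ℕ → Matrix (Fin N) (Fin N) ℝ) (hRnpsd : ∀ n, (Rn n).PosSemidef)
    (rn : ℕ → EuclideanSpace ℝ (Fin N))
    (Fn : ℕ → EuclideanSpace ℝ (Fin N) → ℝ)
    (hFn : ∀ n x, Fn n x = (1/2) * qf (Rn n) x - ofEuc (rn n) ⬝ᵥ ofEuc x + Ψ x)
    (B : EuclideanSpace ℝ (Fin N) → Matrix (Fin N) (Fin N) ℝ)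
    (hBpsd : ∀ x, (B x).PosSemidef)
    (An : ℕ → EuclideanSpace ℝ (Fin N) → Matrix (Fin N) (Fin N) ℝ)
    (hAn : ∀ n x, An n x = Rn n + B x)
    (gradFn : ℕ → EuclideanSpace ℝ (Fin N) → EuclideanSpace ℝ (Fin N))
    (hgradFn : ∀ n x, HasGradientAt (Fn n) (gradFn n x) x)
    (Θ : ℕ → EuclideanSpace ℝ (Fin N) → EuclideanSpace ℝ (Fin N) → ℝ)
    (hΘ : ∀ n x y, Θ n x y =
      Fn n y + ofEuc (gradFn n y) ⬝ᵥ ofEuc (x - y) + (1/2) * qf (An n y) (x - y))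
    (M : ℕ → ℕ) (D : (n : ℕ) → Matrix (Fin N) (Fin (M n)) ℝ)
    (h : ℕ → EuclideanSpace ℝ (Fin N))
    (halg : ∀ n, h (n+1) ∈ rangeD (D n) ∧
      ∀ y ∈ rangeD (D n), Θ n (h (n+1)) (h n) ≤ Θ n y (h n))
    (ha2i : ∀ n, gradFn n (h n) ∈ rangeD (D n) ∧ h n ∈ rangeD (D n))
    :
    ∀ n, Θ n (h (n+1)) (h n) = Fn n (h n) - (1/2) * qf (An n (h n)) (h (n+1) - h n) := by
  intro n
  obtain ⟨hmem, hmin⟩ := halg n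
  obtain ⟨-, hhn⟩ := ha2i n
  obtain ⟨u2, hu2⟩ := hmem
  obtain ⟨u1, hu1⟩ := hhn
  set d : EuclideanSpace ℝ (Fin N) := h (n+1) - h n with hd
  set a : ℝ := (1/2) * qf (An n (h n)) d with hadef
  set b : ℝ := ofEuc (gradFn n (h n)) ⬝ᵥ ofEuc d with hbdef
  have hA : (An n (h n)).PosSemidef := by
    rw [hAn]; exact (hRnpsd n).add (hBpsd (h n))
  have hqf_nonneg : ∀ v : EuclideanSpace ℝ (Fin N), 0 ≤ qf (An n (h n)) v := by
    intro v
    have := hA.dotProduct_mulVec_nonneg (ofEuc v)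
    simpa [qf, dotProduct, star, RCLike.re_to_real] using this
  have ha : 0 ≤ a := by
    rw [hadef]; have := hqf_nonneg d; linarith
  -- membership of the line points
  have hline : ∀ s : ℝ, h n + (1 + s) • d ∈ rangeD (D n) := by
    intro s
    refine ⟨u1 + (1 + s) • (u2 - u1), ?_⟩
    have : h n + (1 + s) • d = toEuc ((D n).mulVec u1 + (1 + s) • ((D n).mulVec u2 - (D n).mulVec u1)) := by
      rw [hd, hu1, hu2]
      rfl
    rw [this]
    congr 1
    rw [Matrix.mulVec_add, Matrix.mulVec_smul, Matrix.mulVec_sub]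
  -- value of Θ along the line
  have hval : ∀ s : ℝ, Θ n (h n + (1 + s) • d) (h n)
      = Fn n (h n) + (1 + s) * b + (1 + s)^2 * a := by
    intro s
    rw [hΘ]
    have hxy : h n + (1 + s) • d - h n = (1 + s) • d := by abel
    rw [hxy, qf_smul]
    rw [hbdef, hadef, ofEuc_smul]
    simp [dotProduct_smul, smul_eq_mul]
    ring
  have hΘ1 : Θ n (h (n+1)) (h n) = Fn n (h n) + b + a := by
    have h0 := hval 0
    have : h n + (1 + (0:ℝ)) • d = h (n+1) := by
      rw [hd]; simp
    rw [this] at h0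
    rw [h0]; ring
  -- the optimality condition
  have hkey : ∀ s : ℝ, 0 ≤ a * s^2 + (2 * a + b) * s := by
    intro s
    have hle := hmin _ (hline s)
    rw [hval s, hΘ1] at hle
    nlinarith [hle]
  have hk0 : 2 * a + b = 0 := quad_key ha hkey
  rw [hΘ1, hadef]
  have hb : b = -2 * a := by linarith
  rw [hb, hadef]
  ring
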